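/- arXiv:1211.5346 — 4 statements merged into one kernel-verified Lean document; each statement's English description precedes it below -/
import Mathlib

section
/- If H₁ and H₂ are finite groups of coprime orders, with H₁ and H₂ both non-cyclic, then σ(H₁ × H₂) = min{σ(H₁), σ(H₂)}. -/
/-!
Every cover of `H₁` (resp. `H₂`) pulls back along the projection to a cover of `H₁ × H₂`
of the same size, so `σ(H₁ × H₂) ≤ min {σ(H₁), σ(H₂)}`. Conversely, since the orders are
coprime, every subgroup of `H₁ × H₂` is the product `X₁ × X₂` of its projections. Take a
cover of `H₁ × H₂`. Either its proper first projections cover `H₁`, or some `g₁ ∈ H₁` lies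
only in first projections equal to `H₁`; then every `(g₁, g₂)` lies in a member `X₁ × X₂`
with `X₁ = H₁`, hence with `X₂` proper, so the second projections cover `H₂`.
-/

def IsCover {G : Type*} [Group G] (𝒳 : Finset (Subgroup G)) : Prop :=
  (∀ X ∈ 𝒳, X ≠ ⊤) ∧ ∀ g : G, ∃ X ∈ 𝒳, g ∈ X

noncomputable def covNum (G : Type*) [Group G] : ℕ :=
  sInf {n | ∃ 𝒳 : Finset (Subgroup G), IsCover 𝒳 ∧ 𝒳.card = n}

def IsMinimalCover {G : Type*} [Group G] (𝒳 : Finset (Subgroup G)) : Prop :=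
  IsCover 𝒳 ∧ 𝒳.card = covNum G

def IsDiagonalType {H₁ H₂ : Type*} [Group H₁] [Group H₂] (M : Subgroup (H₁ × H₂)) : Prop :=
  ∃ (N₁ : Subgroup H₁) (N₂ : Subgroup H₂) (h₁ : N₁.Normal) (h₂ : N₂.Normal),
    haveI := h₁
    haveI := h₂
    IsSimpleGroup (H₁ ⧸ N₁) ∧ ∃ φ : (H₁ ⧸ N₁) ≃* (H₂ ⧸ N₂),
      (M : Set (H₁ × H₂)) = {x | φ (QuotientGroup.mk x.1) = QuotientGroup.mk x.2}

open Subgroup Finset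

section Covers

variable {G H : Type*} [Group G] [Group H]

theorem IsCover.covNum_le {𝒳 : Finset (Subgroup G)} (h𝒳 : IsCover 𝒳) : covNum G ≤ #𝒳 :=
  Nat.sInf_le ⟨𝒳, h𝒳, rfl⟩

theorem exists_isCover_of_not_isCyclic [Finite G] (hG : ¬ IsCyclic G) :
    ∃ 𝒳 : Finset (Subgroup G), IsCover 𝒳 := by
  classical
  have := Fintype.ofFinite G
  refine ⟨univ.image zpowers, ?_,
    fun g => ⟨zpowers g, mem_image_of_mem _ (mem_univ g), mem_zpowers g⟩⟩
  rintro _ hX rfl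
  obtain ⟨g, -, hg⟩ := mem_image.mp hX
  exact hG (isCyclic_iff_exists_zpowers_eq_top.mpr ⟨g, hg⟩)

theorem exists_isMinimalCover [Finite G] (hG : ¬ IsCyclic G) :
    ∃ 𝒳 : Finset (Subgroup G), IsMinimalCover 𝒳 := by
  obtain ⟨𝒳, h𝒳⟩ := exists_isCover_of_not_isCyclic hG
  exact Nat.sInf_mem (s := {n | ∃ 𝒳 : Finset (Subgroup G), IsCover 𝒳 ∧ #𝒳 = n}) ⟨#𝒳, 𝒳, h𝒳, rfl⟩

theorem covNum_le_of_surjective [Finite H] (hH : ¬ IsCyclic H) {f : G →* H}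
    (hf : Function.Surjective f) : covNum G ≤ covNum H := by
  classical
  obtain ⟨𝒴, ⟨h𝒴ne, h𝒴cov⟩, hcard⟩ := exists_isMinimalCover hH
  have hcover : IsCover (𝒴.image (comap f)) := by
    refine ⟨?_, fun g => ?_⟩
    · rintro _ hX htop
      obtain ⟨Y, hY, rfl⟩ := mem_image.mp hX
      exact h𝒴ne Y hY (comap_injective hf (htop.trans (comap_top f).symm))
    · obtain ⟨Y, hY, hg⟩ := h𝒴cov (f g)
      exact ⟨Y.comap f, mem_image_of_mem _ hY, hg⟩
  exact hcover.covNum_le.trans (card_image_le.trans hcard.le)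

theorem covNum_le_card_of_forall_mem_map_ne_top (f : G →* H) (𝒳 : Finset (Subgroup G))
    (h : ∀ y : H, ∃ X ∈ 𝒳, X.map f ≠ ⊤ ∧ y ∈ X.map f) : covNum H ≤ #𝒳 := by
  classical
  have hcover : IsCover ((𝒳.image (map f)).filter (· ≠ ⊤)) := by
    refine ⟨fun Y hY => (mem_filter.mp hY).2, fun y => ?_⟩
    obtain ⟨X, hX, hne, hy⟩ := h y
    exact ⟨X.map f, mem_filter.mpr ⟨mem_image_of_mem _ hX, hne⟩, hy⟩
  exact hcover.covNum_le.trans ((card_filter_le _ _).trans card_image_le)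

end Covers

section Coprime

variable {H₁ H₂ : Type*} [Group H₁] [Group H₂]

theorem Subgroup.mk_fst_one_mem_of_coprime (hcop : (Nat.card H₁).Coprime (Nat.card H₂))
    {X : Subgroup (H₁ × H₂)} {x : H₁ × H₂} (hx : x ∈ X) : (x.1, (1 : H₂)) ∈ X := by
  obtain ⟨m, hm⟩ := exists_pow_eq_self_of_coprime
    (hcop.symm.coprime_dvd_right (_root_.orderOf_dvd_natCard x.1))
  have hpow : (x ^ Nat.card H₂) ^ m = (x.1, 1) :=
    Prod.ext (by simpa using hm) (by simp [pow_card_eq_one'])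
  exact hpow ▸ X.pow_mem (X.pow_mem hx _) m

theorem Subgroup.eq_prod_map_fst_map_snd_of_coprime
    (hcop : (Nat.card H₁).Coprime (Nat.card H₂)) (X : Subgroup (H₁ × H₂)) :
    X = (X.map (MonoidHom.fst H₁ H₂)).prod (X.map (MonoidHom.snd H₁ H₂)) := by
  refine le_antisymm (le_prod_iff.mpr ⟨le_rfl, le_rfl⟩) fun ⟨x₁, x₂⟩ hx => ?_
  obtain ⟨⟨⟨a₁, a₂⟩, ha, rfl : a₁ = x₁⟩, ⟨⟨b₁, b₂⟩, hb, rfl : b₂ = x₂⟩⟩ := mem_prod.mp hx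
  have hb' : ((1 : H₁), b₂) ∈ X := by
    simpa using X.mul_mem (X.inv_mem (mk_fst_one_mem_of_coprime hcop hb)) hb
  simpa using X.mul_mem (mk_fst_one_mem_of_coprime hcop ha) hb'

theorem IsCover.min_covNum_le_card_of_coprime (hcop : (Nat.card H₁).Coprime (Nat.card H₂))
    {𝒳 : Finset (Subgroup (H₁ × H₂))} (h𝒳 : IsCover 𝒳) :
    min (covNum H₁) (covNum H₂) ≤ #𝒳 := by
  by_cases hfst : ∀ g₁ : H₁, ∃ X ∈ 𝒳,
      X.map (MonoidHom.fst H₁ H₂) ≠ ⊤ ∧ g₁ ∈ X.map (MonoidHom.fst H₁ H₂)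
  · exact (min_le_left _ _).trans (covNum_le_card_of_forall_mem_map_ne_top _ _ hfst)
  push Not at hfst
  obtain ⟨g₁, hg₁⟩ := hfst
  refine (min_le_right _ _).trans
    (covNum_le_card_of_forall_mem_map_ne_top (MonoidHom.snd H₁ H₂) _ fun g₂ => ?_)
  obtain ⟨X, hX, hg⟩ := h𝒳.2 (g₁, g₂)
  have hfst_top : X.map (MonoidHom.fst H₁ H₂) = ⊤ :=
    not_not.mp fun hne => hg₁ X hX hne ⟨_, hg, rfl⟩
  refine ⟨X, hX, fun hsnd => h𝒳.1 X hX ?_, ⟨_, hg, rfl⟩⟩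
  rw [eq_prod_map_fst_map_snd_of_coprime hcop X, hsnd, hfst_top, top_prod_top]

end Coprime

theorem stmt3 (H₁ H₂ : Type*) [Group H₁] [Group H₂] [Finite H₁] [Finite H₂]
    (hcop : Nat.Coprime (Nat.card H₁) (Nat.card H₂))
    (h1 : ¬ IsCyclic H₁) (h2 : ¬ IsCyclic H₂) :
    covNum (H₁ × H₂) = min (covNum H₁) (covNum H₂) := by
  refine le_antisymm (le_min ?_ ?_) ?_
  · exact covNum_le_of_surjective h1 (f := MonoidHom.fst H₁ H₂) Prod.fst_surjective
  · exact covNum_le_of_surjective h2 (f := MonoidHom.snd H₁ H₂) Prod.snd_surjective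
  have hprod : ¬ IsCyclic (H₁ × H₂) := fun h =>
    h1 (isCyclic_of_surjective (MonoidHom.fst H₁ H₂) Prod.fst_surjective)
  obtain ⟨𝒳, h𝒳, hcard⟩ := exists_isMinimalCover hprod
  exact hcard ▸ h𝒳.min_covNum_le_card_of_coprime hcop
end

section
/- Let 𝒳 be a minimal cover of a finite group Y and let F be a normal subgroup of Y such that FX ≠ Y for every X ∈ 𝒳. Then F ≤ X for every X ∈ 𝒳. -/
section Cover

variable {G : Type*} [Group G]

theorem covNum_le_card {𝒳 : Finset (Subgroup G)} (h𝒳 : IsCover 𝒳) : covNum G ≤ 𝒳.card :=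
  Nat.sInf_le ⟨𝒳, h𝒳, rfl⟩

theorem Subgroup.mem_sup_of_mul_mem {F X : Subgroup G} {f g : G} (hf : f ∈ F) (hfg : f * g ∈ X) :
    g ∈ F ⊔ X := by
  have hg : g = f⁻¹ * (f * g) := by group
  rw [hg]
  exact mul_mem (Subgroup.mem_sup_left (inv_mem hf)) (Subgroup.mem_sup_right hfg)

theorem IsCover.image_sup_erase [DecidableEq (Subgroup G)] {𝒳 : Finset (Subgroup G)}
    (h𝒳 : IsCover 𝒳) {F X₀ : Subgroup G} {f : G} (hfF : f ∈ F) (hfX₀ : f ∉ X₀)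
    (hsup : ∀ X ∈ 𝒳, F ⊔ X ≠ ⊤) :
    IsCover ((𝒳.erase X₀).image (F ⊔ ·)) := by
  refine ⟨?_, fun g => ?_⟩
  · simp only [Finset.mem_image, Finset.mem_erase]
    rintro _ ⟨X, ⟨-, hX⟩, rfl⟩
    exact hsup X hX
  · suffices ∃ X ∈ 𝒳, X ≠ X₀ ∧ g ∈ F ⊔ X by
      obtain ⟨X, hX, hne, hgX⟩ := this
      exact ⟨F ⊔ X, Finset.mem_image_of_mem _ (Finset.mem_erase.mpr ⟨hne, hX⟩), hgX⟩
    obtain ⟨X, hX, hgX⟩ := h𝒳.2 g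
    by_cases hXX₀ : X = X₀
    · subst hXX₀
      obtain ⟨Z, hZ, hfgZ⟩ := h𝒳.2 (f * g)
      refine ⟨Z, hZ, ?_, Subgroup.mem_sup_of_mul_mem hfF hfgZ⟩
      rintro rfl
      exact hfX₀ ((mul_mem_cancel_right hgX).mp hfgZ)
    · exact ⟨X, hX, hXX₀, Subgroup.mem_sup_right hgX⟩

end Cover

theorem stmt5_general (Y : Type*) [Group Y] (𝒳 : Finset (Subgroup Y))
    (h𝒳 : IsMinimalCover 𝒳) (F : Subgroup Y)
    (h : ∀ X ∈ 𝒳, F ⊔ X ≠ ⊤) :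
    ∀ X ∈ 𝒳, F ≤ X := by
  classical
  intro X₀ hX₀
  by_contra hFX₀
  obtain ⟨f, hfF, hfX₀⟩ := SetLike.not_le_iff_exists.mp hFX₀
  have hsmaller := covNum_le_card (h𝒳.1.image_sup_erase hfF hfX₀ h)
  have hcard : ((𝒳.erase X₀).image (F ⊔ ·)).card < 𝒳.card :=
    Finset.card_image_le.trans_lt (Finset.card_erase_lt_of_mem hX₀)
  exact absurd h𝒳.2 (by omega)

theorem stmt5 (Y : Type*) [Group Y] [Finite Y] (𝒳 : Finset (Subgroup Y))
    (h𝒳 : IsMinimalCover 𝒳) (F : Subgroup Y) (hF : F.Normal)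
    (h : ∀ X ∈ 𝒳, F ⊔ X ≠ ⊤) :
    ∀ X ∈ 𝒳, F ≤ X :=
  stmt5_general Y 𝒳 h𝒳 F h
end

section
/- Let N be a proper normal subgroup of a finite group G, let U₁,…,U_h be proper subgroups of G containing N, and let V₁,…,V_k be proper subgroups with V_iN = G and indices β_i = |G:V_i| satisfying β₁ ≤ … ≤ β_k. If G = U₁ ∪ … ∪ U_h ∪ V₁ ∪ … ∪ V_k but G ≠ U₁ ∪ … ∪ U_h, then β₁ ≤ k. -/
/-!
Pick `g` outside every `Uᵢ`. Since `N ≤ Uᵢ`, the whole coset `gN` misses every `Uᵢ`, so it is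
covered by the `Vⱼ`. As `VⱼN = G`, each `Vⱼ ∩ gN` is empty or a coset of `Vⱼ ∩ N`, a subgroup
of order `|N| / βⱼ ≤ |N| / β₁`; hence `|N| ≤ k |N| / β₁`.
-/

open Pointwise

namespace Subgroup

variable {G : Type*} [Group G]

theorem card_inf_mul_index_of_sup_eq_top {H K : Subgroup G} [K.Normal] [K.FiniteIndex]
    (hHK : H ⊔ K = ⊤) : Nat.card ↥(H ⊓ K) * H.index = Nat.card K := by
  have hH : Nat.card ↥(H ⊓ K) * K.index = Nat.card H := by
    rw [← relIndex_top_right, ← hHK, relIndex_sup_right, ← inf_relIndex_left, ← relIndex_bot_left,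
      ← relIndex_bot_left, relIndex_mul_relIndex _ _ _ bot_le inf_le_left]
  apply Nat.eq_of_mul_eq_mul_right (Nat.pos_of_ne_zero K.index_ne_zero_of_finite)
  rw [mul_right_comm, hH, card_mul_index, card_mul_index]

theorem inter_leftCoset_eq {H K : Subgroup G} {g x : G}
    (hx : x ∈ (H : Set G) ∩ g • (K : Set G)) :
    (H : Set G) ∩ g • (K : Set G) = x • ((H ⊓ K : Subgroup G) : Set G) := by
  obtain ⟨hxH, hxK⟩ := hx
  rw [mem_leftCoset_iff] at hxK
  ext y
  simp only [Set.mem_inter_iff, SetLike.mem_coe, mem_leftCoset_iff, coe_inf]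
  constructor
  · rintro ⟨hyH, hyK⟩
    exact ⟨mul_mem (inv_mem hxH) hyH, by simpa [mul_assoc] using mul_mem (inv_mem hxK) hyK⟩
  · rintro ⟨hyH, hyK⟩
    exact ⟨by simpa using mul_mem hxH hyH, by simpa [mul_assoc] using mul_mem hxK hyK⟩

theorem ncard_inter_leftCoset_le (H K : Subgroup G) (g : G) :
    ((H : Set G) ∩ g • (K : Set G)).ncard ≤ Nat.card ↥(H ⊓ K) := by
  rcases Set.eq_empty_or_nonempty ((H : Set G) ∩ g • (K : Set G)) with hempty | ⟨x, hx⟩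
  · simp [hempty]
  · rw [inter_leftCoset_eq hx, Set.ncard_smul_set]
    exact (Nat.card_coe_set_eq _).symm.le

theorem le_card_of_leftCoset_subset_iUnion [Finite G] {ι : Type*} [Fintype ι] (K : Subgroup G)
    [K.Normal] (V : ι → Subgroup G) (hV : ∀ j, V j ⊔ K = ⊤) {β : ℕ} (hβ : ∀ j, β ≤ (V j).index)
    {g : G} (hg : g • (K : Set G) ⊆ ⋃ j, (V j : Set G)) : β ≤ Fintype.card ι := by
  have hcover : Nat.card K ≤ ∑ j, ((V j : Set G) ∩ g • (K : Set G)).ncard :=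
    calc Nat.card K = (g • (K : Set G)).ncard := by
          rw [Set.ncard_smul_set]; exact Nat.card_coe_set_eq (K : Set G)
      _ = (⋃ j ∈ Finset.univ, (V j : Set G) ∩ g • (K : Set G)).ncard := by
        congr 1
        simpa [← Set.iUnion_inter] using hg
      _ ≤ _ := Finset.set_ncard_biUnion_le _ _
  refine Nat.le_of_mul_le_mul_right ?_ (Nat.card_pos (α := K))
  calc β * Nat.card K ≤ ∑ j, β * ((V j : Set G) ∩ g • (K : Set G)).ncard := by
        rw [← Finset.mul_sum]
        exact Nat.mul_le_mul_left β hcover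
    _ ≤ ∑ _j : ι, Nat.card K := by
        refine Finset.sum_le_sum fun j _ => ?_
        rw [← card_inf_mul_index_of_sup_eq_top (hV j), mul_comm β]
        exact Nat.mul_le_mul (ncard_inter_leftCoset_le _ _ _) (hβ j)
    _ = Fintype.card ι * Nat.card K := by simp

end Subgroup

theorem stmt6_general (G : Type*) [Group G] [Finite G] (N : Subgroup G) (hN : N.Normal)
    (h k : ℕ) (hk : 0 < k)
    (U : Fin h → Subgroup G) (hU : ∀ i, N ≤ U i ∧ U i ≠ ⊤)
    (V : Fin k → Subgroup G) (hV : ∀ j, V j ≠ ⊤ ∧ V j ⊔ N = ⊤)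
    (hmono : ∀ i j : Fin k, i ≤ j → (V i).index ≤ (V j).index)
    (hcover : ∀ g : G, (∃ i, g ∈ U i) ∨ (∃ j, g ∈ V j))
    (hnotU : ¬ ∀ g : G, ∃ i, g ∈ U i) :
    (V ⟨0, hk⟩).index ≤ k := by
  obtain ⟨g, hg⟩ : ∃ g, ∀ i, g ∉ U i := by simpa using hnotU
  have hcoset : g • (N : Set G) ⊆ ⋃ j, (V j : Set G) := by
    intro x hx
    rw [mem_leftCoset_iff] at hx
    rcases hcover x with ⟨i, hxU⟩ | ⟨j, hxV⟩
    · refine absurd ?_ (hg i)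
      simpa using mul_mem hxU (inv_mem ((hU i).1 hx))
    · exact Set.mem_iUnion.2 ⟨j, hxV⟩
  simpa using N.le_card_of_leftCoset_subset_iUnion V (fun j => (hV j).2)
    (fun j => hmono _ j (Fin.mk_le_of_le_val (Nat.zero_le _))) hcoset

theorem stmt6 (G : Type*) [Group G] [Finite G] (N : Subgroup G) (hN : N.Normal)
    (hNprop : N ≠ ⊤) (h k : ℕ) (hk : 0 < k)
    (U : Fin h → Subgroup G) (hU : ∀ i, N ≤ U i ∧ U i ≠ ⊤)
    (V : Fin k → Subgroup G) (hV : ∀ j, V j ≠ ⊤ ∧ V j ⊔ N = ⊤)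
    (hmono : ∀ i j : Fin k, i ≤ j → (V i).index ≤ (V j).index)
    (hcover : ∀ g : G, (∃ i, g ∈ U i) ∨ (∃ j, g ∈ V j))
    (hnotU : ¬ ∀ g : G, ∃ i, g ∈ U i) :
    (V ⟨0, hk⟩).index ≤ k :=
  stmt6_general G N hN h k hk U hU V hV hmono hcover hnotU
end

section
/- Every maximal subgroup M of a direct product H₁ × H₂ of finite groups is either of standard type (M = X₁ × H₂ with X₁ maximal in H₁, or M = H₁ × X₂ with X₂ maximal in H₂) or of diagonal type (there exist maximal normal subgroups N₁ ⊴ H₁, N₂ ⊴ H₂ and an isomorphism φ: H₁/N₁ → H₂/N₂ such that M = {(h₁,h₂) : φ(h₁N₁) = h₂N₂}). -/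
/-!
If a projection of the maximal subgroup `M ≤ H₁ × H₂` is proper, then `M` is the full preimage
of that projection. Otherwise Goursat's lemma presents `M` as the preimage of the graph of an
isomorphism `H₁ ⧸ N₁ ≃* H₂ ⧸ N₂`, where `N₁ = {h | (h, 1) ∈ M}`. The quotient is simple: for a
normal `K ≥ N₁`, the subgroup `M ⊔ (K × 1)` is either `M`, forcing `K = N₁`, or everything,
forcing `K = H₁`.
-/

namespace QuotientGroup

variable {G : Type*} [Group G]

theorem isSimpleGroup_of_maximal_normal {N : Subgroup G} [N.Normal] (hN : N ≠ ⊤)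
    (hmax : ∀ K : Subgroup G, K.Normal → N ≤ K → K = N ∨ K = ⊤) : IsSimpleGroup (G ⧸ N) := by
  have := QuotientGroup.nontrivial_iff.2 hN
  refine ⟨fun L hL => ?_⟩
  have hinj := Subgroup.comap_injective (mk'_surjective N)
  refine (hmax _ (hL.comap _) (le_comap_mk' N L)).imp (fun h => hinj ?_) (fun h => hinj ?_)
  · rwa [MonoidHom.comap_bot, ker_mk']
  · rwa [Subgroup.comap_top]

end QuotientGroup

namespace Subgroup

open Function

variable {G H : Type*} [Group G] [Group H]

lemma isCoatom_of_isCoatom_comap {φ : G →* H} (hφ : Surjective φ) {M : Subgroup H}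
    (hM : IsCoatom (M.comap φ)) : IsCoatom M := by
  refine ⟨fun hM_top => hM.1 (by rw [hM_top, comap_top]), fun K hK => ?_⟩
  rw [← comap_lt_comap_of_surjective hφ] at hK
  exact comap_injective hφ ((hM.2 _ hK).trans (comap_top φ).symm)

section Standard

variable {M : Subgroup (G × H)}

lemma eq_map_fst_prod_top_of_isCoatom (hM : IsCoatom M)
    (hfst : M.map (MonoidHom.fst G H) ≠ ⊤) : M = (M.map (MonoidHom.fst G H)).prod ⊤ := by
  refine ((hM.le_iff.1 (le_prod_iff.2 ⟨le_rfl, le_top⟩)).resolve_left fun h => hfst ?_).symm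
  exact comap_injective (f := MonoidHom.fst G H) Prod.fst_surjective
    (by rwa [← prod_top, comap_top])

lemma eq_top_prod_map_snd_of_isCoatom (hM : IsCoatom M)
    (hsnd : M.map (MonoidHom.snd G H) ≠ ⊤) :
    M = (⊤ : Subgroup G).prod (M.map (MonoidHom.snd G H)) := by
  refine ((hM.le_iff.1 (le_prod_iff.2 ⟨le_top, le_rfl⟩)).resolve_left fun h => hsnd ?_).symm
  exact comap_injective (f := MonoidHom.snd G H) Prod.snd_surjective
    (by rwa [← top_prod, comap_top])

lemma exists_isCoatom_eq_prod_top (hM : IsCoatom M) (hfst : M.map (MonoidHom.fst G H) ≠ ⊤) :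
    ∃ X : Subgroup G, IsCoatom X ∧ M = X.prod ⊤ := by
  have hM_eq := eq_map_fst_prod_top_of_isCoatom hM hfst
  refine ⟨_, isCoatom_of_isCoatom_comap (φ := MonoidHom.fst G H) Prod.fst_surjective ?_, hM_eq⟩
  rwa [← prod_top, ← hM_eq]

lemma exists_isCoatom_eq_top_prod (hM : IsCoatom M) (hsnd : M.map (MonoidHom.snd G H) ≠ ⊤) :
    ∃ X : Subgroup H, IsCoatom X ∧ M = (⊤ : Subgroup G).prod X := by
  have hM_eq := eq_top_prod_map_snd_of_isCoatom hM hsnd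
  refine ⟨_, isCoatom_of_isCoatom_comap (φ := MonoidHom.snd G H) Prod.snd_surjective ?_, hM_eq⟩
  rwa [← top_prod, ← hM_eq]

end Standard

section Diagonal

variable {M : Subgroup (G × H)}

lemma map_fst_eq_top_iff :
    M.map (MonoidHom.fst G H) = ⊤ ↔ Surjective (Prod.fst ∘ M.subtype) :=
  ⟨fun h a => by obtain ⟨x, hx, rfl⟩ := h ▸ mem_top a; exact ⟨⟨x, hx⟩, rfl⟩,
    fun h => eq_top_iff.2 fun a _ => let ⟨x, hx⟩ := h a; ⟨x, x.2, hx⟩⟩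

lemma map_snd_eq_top_iff :
    M.map (MonoidHom.snd G H) = ⊤ ↔ Surjective (Prod.snd ∘ M.subtype) :=
  ⟨fun h a => by obtain ⟨x, hx, rfl⟩ := h ▸ mem_top a; exact ⟨⟨x, hx⟩, rfl⟩,
    fun h => eq_top_iff.2 fun a _ => let ⟨x, hx⟩ := h a; ⟨x, x.2, hx⟩⟩

lemma goursatFst_ne_top (hM : M ≠ ⊤) (hsnd : Surjective (Prod.snd ∘ M.subtype)) :
    M.goursatFst ≠ ⊤ := by
  refine fun h => hM (eq_top_iff.2 fun x _ => ?_)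
  obtain ⟨⟨y, hy⟩, hyx : y.2 = x.2⟩ := hsnd x.2
  have : (x.1 * y.1⁻¹, 1) ∈ M := mem_goursatFst.1 (h ▸ mem_top _)
  convert mul_mem this hy using 1
  ext <;> simp [hyx]

lemma eq_goursatFst_or_eq_top (hM : IsCoatom M) {K : Subgroup G} [K.Normal]
    (hK : M.goursatFst ≤ K) : K = M.goursatFst ∨ K = ⊤ := by
  rcases hM.le_iff.1 (le_sup_left : M ≤ M ⊔ K.prod ⊥) with h | h
  · refine .inr (eq_top_iff.2 fun a _ => ?_)
    obtain ⟨m, hm, k, hk, hmk⟩ := mem_sup_of_normal_right.1 (h ▸ mem_top (a, (1 : H)))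
    have hk₂ : k.2 = 1 := hk.2
    have hm₂ : m.2 = 1 := by simpa [hk₂] using congrArg Prod.snd hmk
    have hm₁ : m.1 ∈ M.goursatFst := mem_goursatFst.2 (by rw [← hm₂]; exact hm)
    have ha : m.1 * k.1 = a := congrArg Prod.fst hmk
    rw [← ha]
    exact mul_mem (hK hm₁) hk.1
  · refine .inl (le_antisymm (fun k hk => mem_goursatFst.2 ?_) hK)
    exact h ▸ mem_sup_right ⟨hk, one_mem _⟩

lemma isDiagonalType_of_isCoatom (hM : IsCoatom M)
    (hfst : Surjective (Prod.fst ∘ M.subtype)) (hsnd : Surjective (Prod.snd ∘ M.subtype)) :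
    IsDiagonalType M := by
  have := normal_goursatFst hfst
  have := normal_goursatSnd hsnd
  obtain ⟨e, he⟩ := goursat_surjective hfst hsnd
  have hM_eq : M = e.toMonoidHom.graph.comap
      ((QuotientGroup.mk' M.goursatFst).prodMap (QuotientGroup.mk' M.goursatSnd)) := by
    rw [← he, MonoidHom.range_comp, range_subtype, comap_map_eq_self]
    rw [MonoidHom.ker_prodMap, QuotientGroup.ker_mk', QuotientGroup.ker_mk']
    exact goursatFst_prod_goursatSnd_le M
  refine ⟨_, _, ‹_›, ‹_›, ?_, e, Set.ext fun x => SetLike.ext_iff.1 hM_eq x⟩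
  exact QuotientGroup.isSimpleGroup_of_maximal_normal (goursatFst_ne_top hM.1 hsnd)
    fun K _ hK => eq_goursatFst_or_eq_top hM hK

end Diagonal

end Subgroup

theorem stmt8_general (H₁ H₂ : Type*) [Group H₁] [Group H₂]
    (M : Subgroup (H₁ × H₂)) (hM : IsCoatom M) :
    (∃ X₁ : Subgroup H₁, IsCoatom X₁ ∧ M = X₁.prod ⊤) ∨
    (∃ X₂ : Subgroup H₂, IsCoatom X₂ ∧ M = (⊤ : Subgroup H₁).prod X₂) ∨
    IsDiagonalType M := by
  by_cases hfst : M.map (MonoidHom.fst H₁ H₂) = ⊤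
  · by_cases hsnd : M.map (MonoidHom.snd H₁ H₂) = ⊤
    · exact .inr (.inr (Subgroup.isDiagonalType_of_isCoatom hM
        (Subgroup.map_fst_eq_top_iff.1 hfst) (Subgroup.map_snd_eq_top_iff.1 hsnd)))
    · exact .inr (.inl (Subgroup.exists_isCoatom_eq_top_prod hM hsnd))
  · exact .inl (Subgroup.exists_isCoatom_eq_prod_top hM hfst)

theorem stmt8 (H₁ H₂ : Type*) [Group H₁] [Group H₂] [Finite H₁] [Finite H₂]
    (M : Subgroup (H₁ × H₂)) (hM : IsCoatom M) :
    (∃ X₁ : Subgroup H₁, IsCoatom X₁ ∧ M = X₁.prod ⊤) ∨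
    (∃ X₂ : Subgroup H₂, IsCoatom X₂ ∧ M = (⊤ : Subgroup H₁).prod X₂) ∨
    IsDiagonalType M :=
  stmt8_general H₁ H₂ M hM
end
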